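/- For the linear pseudo-observation Kalman update with augmented observation operator Ĥ = [H; D] and augmented data ŷ = [y; d], as the pseudo-observation error covariance R^g → 0 (with R fixed and SPD), the analysis mean converges to a point satisfying the constraint D x = d exactly, provided D has full row rank and the prior covariance is SPD. -/

import Mathlib

/-!
At `ε = 0` the innovation covariance `S₀ = Ĥ P Ĥᵀ + blkdiag(R, 0)` is still positive definite: a
vector `(u, v)` killed by both summands has `u = 0` because `R` is positive definite, and then
`Dᵀ v = Ĥᵀ (u, v) = 0` forces `v = 0` because `D` has full row rank. So matrix inversion is
continuous at `S₀` and `μ_a(ε)` tends to the analysis mean `μ₀` computed with `S₀`. Since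
`Ĥ P Ĥᵀ = S₀ - blkdiag(R, 0)`, that mean satisfies `Ĥ μ₀ = ŷ - blkdiag(R, 0) S₀⁻¹ (ŷ - Ĥ μ)`,
and the lower block of this identity is `D μ₀ = d`.
-/

open Matrix Filter Topology
open scoped ComplexOrder

namespace Matrix

section Rank

variable {m n K : Type*} [Fintype n] [Field K]

theorem mulVec_injective_of_rank_eq_card {A : Matrix m n K} (h : A.rank = Fintype.card n) :
    Function.Injective A.mulVec := by
  rw [mulVec_injective_iff, linearIndependent_iff_card_eq_finrank_span, Set.finrank,
    ← rank_eq_finrank_span_cols, h]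

end Rank

section PositiveDefinite

variable {m n c 𝕜 : Type*} [Fintype m] [Fintype n] [Fintype c] [RCLike 𝕜]

theorem PosSemidef.posDef_add {A B : Matrix n n 𝕜} (hA : A.PosSemidef) (hB : B.PosSemidef)
    (h : ∀ x, A *ᵥ x = 0 → B *ᵥ x = 0 → x = 0) : (A + B).PosDef := by
  refine .of_dotProduct_mulVec_pos (hA.isHermitian.add hB.isHermitian) fun x hx => ?_
  rw [add_mulVec, dotProduct_add]
  rcases (hA.dotProduct_mulVec_nonneg x).lt_or_eq with hAx | hAx
  · exact add_pos_of_pos_of_nonneg hAx (hB.dotProduct_mulVec_nonneg x)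
  rcases (hB.dotProduct_mulVec_nonneg x).lt_or_eq with hBx | hBx
  · exact add_pos_of_nonneg_of_pos (hA.dotProduct_mulVec_nonneg x) hBx
  exact absurd (h x ((hA.dotProduct_mulVec_zero_iff x).mp hAx.symm)
    ((hB.dotProduct_mulVec_zero_iff x).mp hBx.symm)) hx

theorem PosDef.conjTranspose_mulVec_eq_zero_of_mul_mul_conjTranspose {A : Matrix n n 𝕜}
    (hA : A.PosDef) (B : Matrix m n 𝕜) {x : m → 𝕜} (hx : (B * A * Bᴴ) *ᵥ x = 0) :
    Bᴴ *ᵥ x = 0 := by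
  by_contra hne
  have := hA.dotProduct_mulVec_pos hne
  simp only [star_mulVec, conjTranspose_conjTranspose, dotProduct_mulVec, vecMul_vecMul] at this
  rw [← dotProduct_mulVec, hx, dotProduct_zero] at this
  exact this.false

theorem posDef_fromRows_mul_mul_conjTranspose_add_fromBlocks {P : Matrix n n 𝕜}
    {R : Matrix m m 𝕜} (H : Matrix m n 𝕜) {D : Matrix c n 𝕜} (hP : P.PosDef) (hR : R.PosDef)
    (hD : Function.Injective Dᴴ.mulVec) :
    (fromRows H D * P * (fromRows H D)ᴴ + fromBlocks R 0 0 0).PosDef := by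
  classical
  have hB : (fromBlocks R 0 0 (0 : Matrix c c 𝕜)).PosSemidef := by
    have := hR.isUnit.invertible
    simpa using (PosDef.fromBlocks₁₁ 0 0 hR).mpr (by simpa using PosSemidef.zero)
  refine (hP.posSemidef.mul_mul_conjTranspose_same _).posDef_add hB fun x hGx hBx => ?_
  have hx₁ : x ∘ Sum.inl = 0 := by
    have hRx : R *ᵥ (x ∘ Sum.inl) = 0 := by
      simpa [fromBlocks_mulVec] using congrArg (· ∘ Sum.inl) hBx
    exact mulVec_injective_iff_isUnit.mpr hR.isUnit (hRx.trans (mulVec_zero R).symm)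
  have hx₂ : x ∘ Sum.inr = 0 := by
    have := hP.conjTranspose_mulVec_eq_zero_of_mul_mul_conjTranspose _ hGx
    rw [conjTranspose_fromRows_eq_fromCols_conjTranspose, fromCols_mulVec, hx₁, mulVec_zero,
      zero_add] at this
    exact hD (this.trans (mulVec_zero _).symm)
  ext (i | i)
  exacts [congrFun hx₁ i, congrFun hx₂ i]

end PositiveDefinite

section Analysis

variable {n o m c K : Type*} [Fintype n] [Fintype o] [DecidableEq o] [Field K]

/-- The innovation covariance `S` is a free argument, so that the vanishing pseudo-observation
covariance becomes a limit in `S`. -/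
noncomputable def analysisMean (P : Matrix n n K) (G : Matrix o n K) (S : Matrix o o K)
    (μ : n → K) (z : o → K) : n → K :=
  μ + (P * Gᵀ * S⁻¹) *ᵥ (z - G *ᵥ μ)

theorem mulVec_analysisMean {P : Matrix n n K} {G : Matrix o n K} {B : Matrix o o K}
    (hS : IsUnit (G * P * Gᵀ + B).det) (μ : n → K) (z : o → K) :
    G *ᵥ analysisMean P G (G * P * Gᵀ + B) μ z =
      z - B *ᵥ ((G * P * Gᵀ + B)⁻¹ *ᵥ (z - G *ᵥ μ)) := by
  set S := G * P * Gᵀ + B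
  have hGPG : G * P * Gᵀ = S - B := by simp [S]
  rw [analysisMean, mulVec_add, mulVec_mulVec, ← Matrix.mul_assoc, ← Matrix.mul_assoc, hGPG,
    sub_mul, mul_nonsing_inv _ hS, sub_mulVec, one_mulVec, ← mulVec_mulVec]
  abel

variable [Fintype m] [Fintype c] [DecidableEq m] [DecidableEq c]

theorem mulVec_analysisMean_fromRows {P : Matrix n n K} (H : Matrix m n K) (D : Matrix c n K)
    (R : Matrix m m K)
    (hS : IsUnit (fromRows H D * P * (fromRows H D)ᵀ + fromBlocks R 0 0 0).det)
    (μ : n → K) (y : m → K) (d : c → K) :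
    D *ᵥ analysisMean P (fromRows H D) (fromRows H D * P * (fromRows H D)ᵀ + fromBlocks R 0 0 0)
      μ (Sum.elim y d) = d := by
  have h := mulVec_analysisMean hS μ (Sum.elim y d)
  rw [fromRows_mulVec, fromBlocks_mulVec] at h
  ext i
  simpa using congrFun h (Sum.inr i)

variable [TopologicalSpace K] [IsTopologicalDivisionRing K]

theorem continuousAt_analysisMean (P : Matrix n n K) (G : Matrix o n K) {S : Matrix o o K}
    (hS : IsUnit S.det) (μ : n → K) (z : o → K) :
    ContinuousAt (fun S => analysisMean P G S μ z) S := by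
  have hinv : ContinuousAt Inv.inv S := by
    refine continuousAt_matrix_inv S ?_
    rw [Ring.inverse_eq_inv']
    exact continuousAt_inv₀ hS.ne_zero
  unfold analysisMean
  fun_prop

end Analysis

end Matrix

/-- Pseudo-observation Kalman update in the vanishing-covariance limit: with a
SPD prior covariance `P`, physical observations `(H, y, R)` (`R` SPD), and a
full-row-rank constraint `D x = d` appended as a pseudo-observation with error
covariance `ε I`, the Kalman analysis mean
`μ_a(ε) = μ + P Ĥᵀ (Ĥ P Ĥᵀ + blkdiag(R, εI))⁻¹ (ŷ − Ĥ μ)`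
(where `Ĥ = [H; D]`, `ŷ = [y; d]`) satisfies the constraint exactly in the
limit: `D μ_a(ε) → d` as `ε → 0⁺`. -/
theorem pseudo_observation_limit_satisfies_constraint
    {n m c : ℕ}
    (P : Matrix (Fin n) (Fin n) ℝ) (hP : P.PosDef)
    (H : Matrix (Fin m) (Fin n) ℝ) (R : Matrix (Fin m) (Fin m) ℝ)
    (hR : R.PosDef) (y : Fin m → ℝ)
    (D : Matrix (Fin c) (Fin n) ℝ) (hD : D.rank = c) (d : Fin c → ℝ)
    (μ : Fin n → ℝ)
    (Hhat : Matrix (Fin m ⊕ Fin c) (Fin n) ℝ) (hHhat : Hhat = fromRows H D)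
    (yhat : Fin m ⊕ Fin c → ℝ) (hyhat : yhat = Sum.elim y d)
    (μa : ℝ → Fin n → ℝ)
    (hμa : ∀ ε, μa ε = μ +
      (P * Hhatᵀ *
        (Hhat * P * Hhatᵀ +
          fromBlocks R 0 0 (ε • (1 : Matrix (Fin c) (Fin c) ℝ)))⁻¹) *ᵥ
        (yhat - Hhat *ᵥ μ)) :
    Tendsto (fun ε => D *ᵥ μa ε) (nhdsWithin 0 (Set.Ioi 0)) (nhds d) := by
  subst hHhat hyhat
  set S : ℝ → Matrix (Fin m ⊕ Fin c) (Fin m ⊕ Fin c) ℝ :=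
    fun ε => fromRows H D * P * (fromRows H D)ᵀ + fromBlocks R 0 0 (ε • 1)
  have hS₀ : S 0 = fromRows H D * P * (fromRows H D)ᵀ + fromBlocks R 0 0 0 := by simp [S]
  have hDinj : Function.Injective Dᴴ.mulVec :=
    mulVec_injective_of_rank_eq_card (by rw [rank_conjTranspose, hD, Fintype.card_fin])
  have hS₀det : IsUnit (S 0).det := by
    rw [← isUnit_iff_isUnit_det, hS₀]
    simpa using (posDef_fromRows_mul_mul_conjTranspose_add_fromBlocks H hP hR hDinj).isUnit
  have hlimit : D *ᵥ analysisMean P (fromRows H D) (S 0) μ (Sum.elim y d) = d := by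
    rw [hS₀] at hS₀det ⊢
    exact mulVec_analysisMean_fromRows H D R hS₀det μ y d
  have hS : Tendsto S (𝓝[>] 0) (𝓝 (S 0)) :=
    ((by fun_prop : Continuous S).tendsto 0).mono_left nhdsWithin_le_nhds
  have hmean :=
    (continuousAt_analysisMean P (fromRows H D) hS₀det μ (Sum.elim y d)).tendsto.comp hS
  have hDmean := ((Continuous.matrix_mulVec (A := fun _ => D) continuous_const
    continuous_id).tendsto _).comp hmean
  simp only [Function.comp_def, id, hlimit] at hDmean
  rwa [funext hμa]
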